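/- arXiv:2404.10498 — 2 statements merged into one kernel-verified Lean document; each statement's English description precedes it below -/
import Mathlib

section
/- Let F1 and F2 be two families of functions mapping a set X to [0,1], and let F = {x ↦ f1(x) * f2(x) : f1 ∈ F1, f2 ∈ F2} be the family of pointwise products. Then for any finite sample S of size m, the empirical Rademacher complexity of F is bounded by twice the sum of the empirical Rademacher complexities of F1 and F2: R̂_S(F) ≤ 2(R̂_S(F1) + R̂_S(F2)). -/
open Set

/-- Empirical Rademacher complexity of a class `G` of real-valued functions
over a sample `S` of size `m`: the average over all sign patterns
`σ : Fin m → Bool` of `sup_{g ∈ G} (1/m) ∑ i σ_i g (S i)`. -/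
noncomputable def empRad {X : Type*} {m : ℕ} (G : Set (X → ℝ)) (S : Fin m → X) : ℝ :=
  (∑ σ : Fin m → Bool,
      sSup ((fun g : X → ℝ => (∑ i : Fin m, (if σ i then (1:ℝ) else -1) * g (S i)) / m) '' G))
    / 2 ^ m

namespace EmpRadAux

variable {m : ℕ}

noncomputable def eps (σ : Fin m → Bool) (i : Fin m) : ℝ := if σ i then 1 else -1

lemma abs_eps (σ : Fin m → Bool) (i : Fin m) : |eps σ i| = 1 := by
  unfold eps; split <;> simp

lemma eps_mul_le {x c : ℝ} (h : |x| ≤ c) (σ : Fin m → Bool) (i : Fin m) :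
    eps σ i * x ≤ c := by
  calc eps σ i * x ≤ |eps σ i * x| := le_abs_self _
  _ = |x| := by rw [abs_mul, abs_eps, one_mul]
  _ ≤ c := h

def flipAll : (Fin m → Bool) ≃ (Fin m → Bool) :=
  Function.Involutive.toPerm (fun σ i => !σ i) (fun σ => by funext i; simp)

lemma sum_flipAll (g : (Fin m → Bool) → ℝ) :
    ∑ σ : Fin m → Bool, g (fun i => !σ i) = ∑ σ : Fin m → Bool, g σ :=
  Fintype.sum_equiv flipAll _ _ (fun σ => rfl)

lemma eps_not (σ : Fin m → Bool) (i : Fin m) : eps (fun k => !σ k) i = - eps σ i := by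
  cases h : σ i <;> simp [eps, h]

def flipAt (j : Fin m) : (Fin m → Bool) ≃ (Fin m → Bool) :=
  Function.Involutive.toPerm (fun σ => Function.update σ j (!σ j))
    (fun σ => by
      funext i
      by_cases h : i = j
      · subst h; simp
      · simp [Function.update_of_ne h])

lemma eps_flipAt_self (j : Fin m) (σ : Fin m → Bool) :
    eps (flipAt j σ) j = - eps σ j := by
  cases h : σ j <;> simp [eps, flipAt, Function.Involutive.toPerm, h]

lemma eps_flipAt_ne {i j : Fin m} (h : i ≠ j) (σ : Fin m → Bool) :
    eps (flipAt j σ) i = eps σ i := by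
  simp [eps, flipAt, Function.Involutive.toPerm, Function.update_of_ne h]

noncomputable def ker (σ : Fin m → Bool) (v : Fin m → ℝ) : ℝ := ∑ i, eps σ i * v i

lemma ker_not (σ : Fin m → Bool) (v : Fin m → ℝ) :
    ker (fun k => !σ k) v = - ker σ v := by
  unfold ker
  rw [← Finset.sum_neg_distrib]
  exact Finset.sum_congr rfl fun i _ => by rw [eps_not]; ring

noncomputable def QQ (V : Set (Fin m → ℝ)) : ℝ := ∑ σ : Fin m → Bool, sSup (ker σ '' V)

lemma bddAbove_of_forall_le {α : Type*} {V : Set α} {g : α → ℝ} {M : ℝ}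
    (h : ∀ v ∈ V, g v ≤ M) : BddAbove (g '' V) :=
  ⟨M, by rintro _ ⟨v, hv, rfl⟩; exact h v hv⟩

lemma bddAbove_ker {V : Set (Fin m → ℝ)} {c : ℝ} (hb : ∀ v ∈ V, ∀ i, |v i| ≤ c)
    (σ : Fin m → Bool) : BddAbove (ker σ '' V) :=
  bddAbove_of_forall_le (M := ∑ _i : Fin m, c)
    (fun v hv => Finset.sum_le_sum fun i _ => eps_mul_le (hb v hv i) σ i)

lemma QQ_nonneg {V : Set (Fin m → ℝ)} (hV : V.Nonempty) {c : ℝ}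
    (hb : ∀ v ∈ V, ∀ i, |v i| ≤ c) : 0 ≤ QQ V := by
  obtain ⟨v₀, hv₀⟩ := hV
  have key : ∀ σ : Fin m → Bool, 0 ≤ sSup (ker σ '' V) + sSup (ker (fun k => !σ k) '' V) := by
    intro σ
    have h1 : ker σ v₀ ≤ sSup (ker σ '' V) := le_csSup (bddAbove_ker hb σ) (mem_image_of_mem _ hv₀)
    have h2 : ker (fun k => !σ k) v₀ ≤ sSup (ker (fun k => !σ k) '' V) :=
      le_csSup (bddAbove_ker hb _) (mem_image_of_mem _ hv₀)
    rw [ker_not] at h2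
    linarith
  have : 0 ≤ ∑ σ : Fin m → Bool, (sSup (ker σ '' V) + sSup (ker (fun k => !σ k) '' V)) :=
    Finset.sum_nonneg fun σ _ => key σ
  rw [Finset.sum_add_distrib] at this
  have h3 : ∑ σ : Fin m → Bool, sSup (ker (fun k => !σ k) '' V)
      = ∑ σ : Fin m → Bool, sSup (ker σ '' V) :=
    sum_flipAll (fun σ => sSup (ker σ '' V))
  rw [h3] at this
  unfold QQ
  linarith

lemma contraction {m : ℕ} {V : Set (Fin m → ℝ)} (hV : V.Nonempty) {c c' L : ℝ}
    (hL : 0 ≤ L) {φ : ℝ → ℝ}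
    (hb : ∀ v ∈ V, ∀ i, |v i| ≤ c)
    (hφb : ∀ a : ℝ, |a| ≤ c → |φ a| ≤ c')
    (hlip : ∀ a b : ℝ, |a| ≤ c → |b| ≤ c → φ a - φ b ≤ L * |a - b|) :
    QQ ((fun v => φ ∘ v) '' V) ≤ L * QQ V := by
  classical
  set M : ℝ := max c' (L * c) with hM
  set ψ : Finset (Fin m) → Fin m → ℝ → ℝ :=
    fun T i u => if i ∈ T then φ u else L * u with hψ
  have hψb : ∀ (T : Finset (Fin m)), ∀ v ∈ V, ∀ i : Fin m, |ψ T i (v i)| ≤ M := by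
    intro T v hv i
    by_cases h : i ∈ T
    · simp only [hψ, if_pos h]
      exact le_trans (hφb _ (hb v hv i)) (le_max_left _ _)
    · simp only [hψ, if_neg h]
      refine le_trans ?_ (le_max_right _ _)
      rw [abs_mul, abs_of_nonneg hL]
      exact mul_le_mul_of_nonneg_left (hb v hv i) hL
  set KT : Finset (Fin m) → (Fin m → Bool) → (Fin m → ℝ) → ℝ :=
    fun T σ v => ∑ i, eps σ i * ψ T i (v i) with hKT
  set QT : Finset (Fin m) → ℝ := fun T => ∑ σ : Fin m → Bool, sSup (KT T σ '' V) with hQT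
  have hbddT : ∀ (T : Finset (Fin m)) (σ : Fin m → Bool), BddAbove (KT T σ '' V) := fun T σ =>
    bddAbove_of_forall_le (M := ∑ _i : Fin m, M)
      (fun v hv => Finset.sum_le_sum fun i _ => eps_mul_le (hψb T v hv i) σ i)
  have step : ∀ (j : Fin m) (T : Finset (Fin m)), j ∉ T → QT (insert j T) ≤ QT T := by
    intro j T hj
    set R : (Fin m → Bool) → (Fin m → ℝ) → ℝ :=
      fun σ v => ∑ i ∈ Finset.univ.erase j, eps σ i * ψ T i (v i) with hR
    have hK' : ∀ σ v, KT (insert j T) σ v = eps σ j * φ (v j) + R σ v := by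
      intro σ v
      simp only [hKT]
      rw [← Finset.add_sum_erase _ _ (Finset.mem_univ j)]
      congr 1
      · simp [hψ]
      · apply Finset.sum_congr rfl; intro i hi
        have hne : i ≠ j := Finset.ne_of_mem_erase hi
        simp [hψ, Finset.mem_insert, hne]
    have hK : ∀ σ v, KT T σ v = eps σ j * (L * v j) + R σ v := by
      intro σ v
      simp only [hKT]
      rw [← Finset.add_sum_erase _ _ (Finset.mem_univ j)]
      congr 1
      simp [hψ, hj]
    have hRflip : ∀ σ v, R (flipAt j σ) v = R σ v := by
      intro σ v
      apply Finset.sum_congr rfl; intro i hi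
      rw [eps_flipAt_ne (Finset.ne_of_mem_erase hi)]
    have key : ∀ σ : Fin m → Bool,
        sSup (KT (insert j T) σ '' V) + sSup (KT (insert j T) (flipAt j σ) '' V)
          ≤ sSup (KT T σ '' V) + sSup (KT T (flipAt j σ) '' V) := by
      intro σ
      have elem : ∀ v ∈ V, ∀ v' ∈ V,
          KT (insert j T) σ v + KT (insert j T) (flipAt j σ) v'
            ≤ sSup (KT T σ '' V) + sSup (KT T (flipAt j σ) '' V) := by
        intro v hv v' hv'
        have hA := le_csSup (hbddT T σ) (mem_image_of_mem (KT T σ) hv)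
        have hB := le_csSup (hbddT T σ) (mem_image_of_mem (KT T σ) hv')
        have hA' := le_csSup (hbddT T (flipAt j σ)) (mem_image_of_mem (KT T (flipAt j σ)) hv')
        have hB' := le_csSup (hbddT T (flipAt j σ)) (mem_image_of_mem (KT T (flipAt j σ)) hv)
        rw [hK σ v] at hA
        rw [hK σ v'] at hB
        rw [hK (flipAt j σ) v', eps_flipAt_self, hRflip] at hA'
        rw [hK (flipAt j σ) v, eps_flipAt_self, hRflip] at hB'
        rw [hK' σ v, hK' (flipAt j σ) v', eps_flipAt_self, hRflip]
        have hlip1 : φ (v j) - φ (v' j) ≤ L * |v j - v' j| :=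
          hlip _ _ (hb v hv j) (hb v' hv' j)
        have hlip2 : φ (v' j) - φ (v j) ≤ L * |v j - v' j| := by
          rw [abs_sub_comm]; exact hlip _ _ (hb v' hv' j) (hb v hv j)
        have hmulsub : L * (v j - v' j) = L * v j - L * v' j := by ring
        have hmulsub' : L * (v' j - v j) = L * v' j - L * v j := by ring
        have hs : eps σ j = 1 ∨ eps σ j = -1 := by
          unfold eps; split
          · exact Or.inl rfl
          · exact Or.inr rfl
        rcases hs with hs | hs <;> rw [hs] at hA hB hA' hB' ⊢ <;>
          rcases le_total (v' j) (v j) with hvv | hvv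
        · rw [abs_of_nonneg (by linarith)] at hlip1; linarith
        · rw [abs_of_nonpos (by linarith), neg_sub, hmulsub'] at hlip1; linarith
        · rw [abs_of_nonneg (by linarith), hmulsub] at hlip2; linarith
        · rw [abs_of_nonpos (by linarith), neg_sub] at hlip2; linarith
      have h1 : sSup (KT (insert j T) σ '' V)
          ≤ sSup (KT T σ '' V) + sSup (KT T (flipAt j σ) '' V)
            - sSup (KT (insert j T) (flipAt j σ) '' V) := by
        apply csSup_le (hV.image _)
        rintro _ ⟨v, hv, rfl⟩
        rw [le_sub_iff_add_le]
        rw [add_comm]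
        rw [← le_sub_iff_add_le]
        apply csSup_le (hV.image _)
        rintro _ ⟨v', hv', rfl⟩
        rw [le_sub_iff_add_le, add_comm]
        exact elem v hv v' hv'
      linarith
    have double : ∀ T' : Finset (Fin m),
        2 * QT T' = ∑ σ : Fin m → Bool,
          (sSup (KT T' σ '' V) + sSup (KT T' (flipAt j σ) '' V)) := by
      intro T'
      rw [Finset.sum_add_distrib]
      have : ∑ σ : Fin m → Bool, sSup (KT T' (flipAt j σ) '' V)
          = ∑ σ : Fin m → Bool, sSup (KT T' σ '' V) :=
        Equiv.sum_comp (flipAt j) (fun σ => sSup (KT T' σ '' V))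
      rw [this, hQT]; ring
    have h2 : 2 * QT (insert j T) ≤ 2 * QT T := by
      rw [double, double]
      exact Finset.sum_le_sum fun σ _ => key σ
    linarith
  have main : ∀ T : Finset (Fin m), QT T ≤ QT ∅ := by
    intro T
    induction T using Finset.induction_on with
    | empty => exact le_refl _
    | insert _ _ hj ih => exact le_trans (step _ _ hj) ih
  have huniv : QQ ((fun v => φ ∘ v) '' V) = QT Finset.univ := by
    unfold QQ
    apply Finset.sum_congr rfl; intro σ _
    rw [image_image]
    congr 1
    funext v
    simp [ker, hKT, hψ, Function.comp]
  have hempty : QT ∅ ≤ L * QQ V := by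
    rw [hQT]
    unfold QQ
    rw [Finset.mul_sum]
    apply Finset.sum_le_sum; intro σ _
    apply csSup_le (hV.image _)
    rintro _ ⟨v, hv, rfl⟩
    have : KT ∅ σ v = L * ker σ v := by
      simp only [hKT]
      simp only [hψ, Finset.notMem_empty, if_false]
      rw [ker, Finset.mul_sum]
      exact Finset.sum_congr rfl fun i _ => by ring
    rw [this]
    exact mul_le_mul_of_nonneg_left
      (le_csSup (bddAbove_ker hb σ) (mem_image_of_mem _ hv)) hL
  calc QQ ((fun v => φ ∘ v) '' V) = QT Finset.univ := huniv
  _ ≤ QT ∅ := main _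
  _ ≤ L * QQ V := hempty
lemma bddAbove_image_div {A : Set ℝ} (hbd : BddAbove A) {d : ℝ} (hd : 0 < d) :
    BddAbove ((fun x => x / d) '' A) := by
  obtain ⟨u, hu⟩ := hbd
  refine ⟨u / d, ?_⟩
  rintro _ ⟨a, ha, rfl⟩
  exact div_le_div_of_nonneg_right (hu ha) hd.le

lemma sSup_image_div {A : Set ℝ} (hA : A.Nonempty) (hbd : BddAbove A) {d : ℝ} (hd : 0 < d) :
    sSup ((fun x => x / d) '' A) = sSup A / d := by
  apply le_antisymm
  · apply csSup_le (hA.image _)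
    rintro _ ⟨a, ha, rfl⟩
    exact div_le_div_of_nonneg_right (le_csSup hbd ha) hd.le
  · rw [div_le_iff₀ hd]
    apply csSup_le hA
    intro a ha
    have h1 : a / d ≤ sSup ((fun x => x / d) '' A) :=
      le_csSup (bddAbove_image_div hbd hd) (mem_image_of_mem _ ha)
    calc a = (a / d) * d := by field_simp
    _ ≤ sSup ((fun x => x / d) '' A) * d := by gcongr

lemma empRad_empty {X : Type*} {m : ℕ} (S : Fin m → X) :
    empRad (∅ : Set (X → ℝ)) S = 0 := by
  unfold empRad
  simp [Real.sSup_empty]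

lemma empRad_mzero {X : Type*} (G : Set (X → ℝ)) (S : Fin 0 → X) :
    empRad G S = 0 := by
  unfold empRad
  rcases eq_empty_or_nonempty G with h | h
  · rw [h]; simp [Real.sSup_empty]
  · have himg : ∀ σ : Fin 0 → Bool,
        (fun g : X → ℝ => (∑ i : Fin 0, (if σ i then (1:ℝ) else -1) * g (S i)) / ((0:ℕ):ℝ)) '' G
          = {0} := by
      intro σ
      have heq : (fun g : X → ℝ =>
          (∑ i : Fin 0, (if σ i then (1:ℝ) else -1) * g (S i)) / ((0:ℕ):ℝ)) = fun _ => (0:ℝ) := by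
        funext g; simp
      rw [heq]
      exact h.image_const 0
    simp only [himg, csSup_singleton]
    simp

lemma hb_emb {X : Type*} {m : ℕ} {S : Fin m → X} {G : Set (X → ℝ)} {c : ℝ}
    (hb : ∀ f ∈ G, ∀ x, |f x| ≤ c) :
    ∀ v ∈ (fun f : X → ℝ => fun i => f (S i)) '' G, ∀ i, |v i| ≤ c := by
  rintro _ ⟨f, hf, rfl⟩ i
  exact hb f hf (S i)

lemma empRad_eq {X : Type*} {m : ℕ} (S : Fin m → X) (G : Set (X → ℝ)) (hG : G.Nonempty)
    {c : ℝ} (hb : ∀ f ∈ G, ∀ x, |f x| ≤ c) (hm : 0 < m) :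
    empRad G S = QQ ((fun f : X → ℝ => fun i => f (S i)) '' G) / m / 2 ^ m := by
  have hmR : (0:ℝ) < m := by exact_mod_cast hm
  unfold empRad QQ
  have hper : ∀ σ : Fin m → Bool,
      sSup ((fun g : X → ℝ => (∑ i : Fin m, (if σ i then (1:ℝ) else -1) * g (S i)) / m) '' G)
        = sSup (ker σ '' ((fun f : X → ℝ => fun i => f (S i)) '' G)) / m := by
    intro σ
    have himg : (fun g : X → ℝ => (∑ i : Fin m, (if σ i then (1:ℝ) else -1) * g (S i)) / m) '' G
        = (fun x => x / (m:ℝ)) '' (ker σ '' ((fun f : X → ℝ => fun i => f (S i)) '' G)) := by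
      rw [image_image, image_image]
      rfl
    rw [himg, sSup_image_div ((hG.image _).image _) (bddAbove_ker (hb_emb hb) σ) hmR]
  simp only [hper]
  rw [← Finset.sum_div]

lemma empRad_nonneg {X : Type*} {m : ℕ} (S : Fin m → X) (G : Set (X → ℝ)) {c : ℝ}
    (hb : ∀ f ∈ G, ∀ x, |f x| ≤ c) : 0 ≤ empRad G S := by
  rcases eq_empty_or_nonempty G with h | h
  · rw [h, empRad_empty]
  rcases Nat.eq_zero_or_pos m with hm | hm
  · subst hm; rw [empRad_mzero]
  rw [empRad_eq S G h hb hm]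
  have h0 : 0 ≤ QQ ((fun f : X → ℝ => fun i => f (S i)) '' G) :=
    QQ_nonneg (h.image _) (hb_emb hb)
  have : (0:ℝ) < m := by exact_mod_cast hm
  apply div_nonneg (div_nonneg h0 (by positivity)) (by positivity)

end EmpRadAux

open EmpRadAux in
/-- Product-class bound: if `F1, F2` map into `[0,1]`, the empirical Rademacher
complexity of the pointwise-product class is at most `2 (R̂_S(F1) + R̂_S(F2))`. -/
theorem empRad_product_le {X : Type*} {m : ℕ} (S : Fin m → X) (F1 F2 : Set (X → ℝ))
    (h1 : ∀ f ∈ F1, ∀ x, f x ∈ Icc (0:ℝ) 1)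
    (h2 : ∀ f ∈ F2, ∀ x, f x ∈ Icc (0:ℝ) 1) :
    empRad {g | ∃ f1 ∈ F1, ∃ f2 ∈ F2, g = fun x => f1 x * f2 x} S ≤
      2 * (empRad F1 S + empRad F2 S) := by
  classical
  open EmpRadAux in
  set Fprod : Set (X → ℝ) := {g | ∃ f1 ∈ F1, ∃ f2 ∈ F2, g = fun x => f1 x * f2 x} with hFprod
  -- pointwise bounds in |·| form
  have hb1 : ∀ f ∈ F1, ∀ x, |f x| ≤ 1 := by
    intro f hf x; obtain ⟨ha, hb⟩ := h1 f hf x; rw [abs_le]; constructor <;> linarith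
  have hb2 : ∀ f ∈ F2, ∀ x, |f x| ≤ 1 := by
    intro f hf x; obtain ⟨ha, hb⟩ := h2 f hf x; rw [abs_le]; constructor <;> linarith
  have hbp : ∀ g ∈ Fprod, ∀ x, |g x| ≤ 1 := by
    rintro g ⟨f1, hf1, f2, hf2, rfl⟩ x
    obtain ⟨ha1, hb1'⟩ := h1 f1 hf1 x
    obtain ⟨ha2, hb2'⟩ := h2 f2 hf2 x
    show |f1 x * f2 x| ≤ 1
    rw [abs_le]; constructor <;> nlinarith
  -- degenerate cases
  rcases Nat.eq_zero_or_pos m with hm | hm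
  · subst hm
    rw [empRad_mzero, empRad_mzero, empRad_mzero]
    norm_num
  rcases eq_empty_or_nonempty F1 with hF1 | hF1
  · have hpe : Fprod = ∅ := by
      rw [hFprod]; ext g; simp [hF1]
    rw [hpe, empRad_empty, hF1, empRad_empty]
    have := empRad_nonneg S F2 hb2
    linarith
  rcases eq_empty_or_nonempty F2 with hF2 | hF2
  · have hpe : Fprod = ∅ := by
      rw [hFprod]; ext g; simp [hF2]
    rw [hpe, empRad_empty, hF2, empRad_empty]
    have := empRad_nonneg S F1 hb1
    linarith
  -- main case
  set emb : (X → ℝ) → (Fin m → ℝ) := fun f => fun i => f (S i) with hemb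
  set V1 : Set (Fin m → ℝ) := emb '' F1 with hV1
  set V2 : Set (Fin m → ℝ) := emb '' F2 with hV2
  set Vp : Set (Fin m → ℝ) := emb '' Fprod with hVp
  set P : Set (Fin m → ℝ) :=
    (fun q : (X → ℝ) × (X → ℝ) => fun i => q.1 (S i) + q.2 (S i)) '' (F1 ×ˢ F2) with hP
  set D : Set (Fin m → ℝ) :=
    (fun q : (X → ℝ) × (X → ℝ) => fun i => q.1 (S i) - q.2 (S i)) '' (F1 ×ˢ F2) with hD
  set φ : ℝ → ℝ := fun u => u ^ 2 / 4 with hφ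
  have hPne : P.Nonempty := hF1.prod hF2 |>.image _
  have hDne : D.Nonempty := hF1.prod hF2 |>.image _
  have hbV1 : ∀ v ∈ V1, ∀ i, |v i| ≤ 1 := hb_emb hb1
  have hbV2 : ∀ v ∈ V2, ∀ i, |v i| ≤ 1 := hb_emb hb2
  have hbP : ∀ v ∈ P, ∀ i, |v i| ≤ 2 := by
    rintro _ ⟨⟨f1, f2⟩, ⟨hf1, hf2⟩, rfl⟩ i
    have := hb1 f1 hf1 (S i); have := hb2 f2 hf2 (S i)
    calc |f1 (S i) + f2 (S i)| ≤ |f1 (S i)| + |f2 (S i)| := abs_add_le _ _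
    _ ≤ 2 := by linarith
  have hbD : ∀ v ∈ D, ∀ i, |v i| ≤ 1 := by
    rintro _ ⟨⟨f1, f2⟩, ⟨hf1, hf2⟩, rfl⟩ i
    obtain ⟨ha1, hc1⟩ := h1 f1 hf1 (S i)
    obtain ⟨ha2, hc2⟩ := h2 f2 hf2 (S i)
    rw [abs_le]; constructor <;> simp <;> linarith
  have hφb2 : ∀ a : ℝ, |a| ≤ 2 → |φ a| ≤ 1 := by
    intro a ha
    have h := abs_nonneg a
    have hsq : a ^ 2 ≤ 4 := by nlinarith [sq_abs a]
    rw [hφ]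
    rw [abs_div, abs_of_nonneg (by positivity : (0:ℝ) ≤ a ^ 2)]
    simp only [abs_of_nonneg (by norm_num : (0:ℝ) ≤ 4)]
    linarith [hsq]
  have hφb1 : ∀ a : ℝ, |a| ≤ 1 → |φ a| ≤ 1 := by
    intro a ha; exact hφb2 a (by linarith)
  have hlip2 : ∀ a b : ℝ, |a| ≤ 2 → |b| ≤ 2 → φ a - φ b ≤ 1 * |a - b| := by
    intro a b ha hb
    have h1' : a + b ≤ 4 := by
      have := le_abs_self a; have := le_abs_self b; linarith
    have h2' : -4 ≤ a + b := by
      have := neg_abs_le a; have := neg_abs_le b; linarith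
    calc φ a - φ b = (a + b) * (a - b) / 4 := by rw [hφ]; ring
    _ ≤ |(a + b) * (a - b)| / 4 :=
        div_le_div_of_nonneg_right (le_abs_self _) (by norm_num)
    _ = |a + b| * |a - b| / 4 := by rw [abs_mul]
    _ ≤ 4 * |a - b| / 4 :=
        div_le_div_of_nonneg_right
          (mul_le_mul_of_nonneg_right (abs_le.mpr ⟨h2', h1'⟩) (abs_nonneg _)) (by norm_num)
    _ = 1 * |a - b| := by ring
  have hlip1 : ∀ a b : ℝ, |a| ≤ 1 → |b| ≤ 1 → φ a - φ b ≤ (1/2) * |a - b| := by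
    intro a b ha hb
    have h1' : a + b ≤ 2 := by
      have := le_abs_self a; have := le_abs_self b; linarith
    have h2' : -2 ≤ a + b := by
      have := neg_abs_le a; have := neg_abs_le b; linarith
    calc φ a - φ b = (a + b) * (a - b) / 4 := by rw [hφ]; ring
    _ ≤ |(a + b) * (a - b)| / 4 :=
        div_le_div_of_nonneg_right (le_abs_self _) (by norm_num)
    _ = |a + b| * |a - b| / 4 := by rw [abs_mul]
    _ ≤ 2 * |a - b| / 4 :=
        div_le_div_of_nonneg_right
          (mul_le_mul_of_nonneg_right (abs_le.mpr ⟨h2', h1'⟩) (abs_nonneg _)) (by norm_num)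
    _ = (1/2) * |a - b| := by ring
  have hbφP : ∀ w ∈ (fun v => φ ∘ v) '' P, ∀ i, |w i| ≤ 1 := by
    rintro _ ⟨p, hp, rfl⟩ i
    exact hφb2 _ (hbP p hp i)
  have hbφD : ∀ w ∈ (fun v => φ ∘ v) '' D, ∀ i, |w i| ≤ 1 := by
    rintro _ ⟨p, hp, rfl⟩ i
    exact hφb1 _ (hbD p hp i)
  have hFpne : Fprod.Nonempty := by
    obtain ⟨f1, hf1⟩ := hF1; obtain ⟨f2, hf2⟩ := hF2
    exact ⟨_, f1, hf1, f2, hf2, rfl⟩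
  -- step A
  have stepA : QQ Vp ≤ QQ ((fun v => φ ∘ v) '' P) + QQ ((fun v => φ ∘ v) '' D) := by
    have perσ : ∀ σ : Fin m → Bool,
        sSup (ker σ '' Vp) ≤ sSup (ker σ '' ((fun v => φ ∘ v) '' P))
          + sSup (ker (fun k => !σ k) '' ((fun v => φ ∘ v) '' D)) := by
      intro σ
      apply csSup_le ((hFpne.image _).image _)
      rintro _ ⟨_, ⟨g, hg, rfl⟩, rfl⟩
      obtain ⟨f1, hf1, f2, hf2, rfl⟩ := hg
      have hpmem : φ ∘ (fun i => f1 (S i) + f2 (S i)) ∈ (fun v => φ ∘ v) '' P :=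
        mem_image_of_mem _ ⟨(f1, f2), ⟨hf1, hf2⟩, rfl⟩
      have hdmem : φ ∘ (fun i => f1 (S i) - f2 (S i)) ∈ (fun v => φ ∘ v) '' D :=
        mem_image_of_mem _ ⟨(f1, f2), ⟨hf1, hf2⟩, rfl⟩
      have e1 := le_csSup (bddAbove_ker hbφP σ) (mem_image_of_mem (ker σ) hpmem)
      have e2 := le_csSup (bddAbove_ker hbφD (fun k => !σ k))
        (mem_image_of_mem (ker (fun k => !σ k)) hdmem)
      have identity : ker σ (emb (fun x => f1 x * f2 x))
          = ker σ (φ ∘ (fun i => f1 (S i) + f2 (S i)))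
            + ker (fun k => !σ k) (φ ∘ (fun i => f1 (S i) - f2 (S i))) := by
        rw [ker_not]
        unfold ker
        rw [← sub_eq_add_neg, ← Finset.sum_sub_distrib]
        apply Finset.sum_congr rfl; intro i _
        have : f1 (S i) * f2 (S i)
            = φ (f1 (S i) + f2 (S i)) - φ (f1 (S i) - f2 (S i)) := by
          rw [hφ]; ring
        simp only [hemb, Function.comp]
        rw [this]
        ring
      rw [identity]
      linarith [e1, e2]
    calc QQ Vp ≤ ∑ σ : Fin m → Bool,
        (sSup (ker σ '' ((fun v => φ ∘ v) '' P))
          + sSup (ker (fun k => !σ k) '' ((fun v => φ ∘ v) '' D))) :=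
          Finset.sum_le_sum fun σ _ => perσ σ
    _ = QQ ((fun v => φ ∘ v) '' P) + QQ ((fun v => φ ∘ v) '' D) := by
        rw [Finset.sum_add_distrib]
        congr 1
        exact sum_flipAll (fun σ => sSup (ker σ '' ((fun v => φ ∘ v) '' D)))
  -- contraction steps
  have stepB : QQ ((fun v => φ ∘ v) '' P) ≤ 1 * QQ P :=
    contraction hPne (by norm_num) hbP hφb2 hlip2
  have stepC : QQ ((fun v => φ ∘ v) '' D) ≤ (1/2) * QQ D :=
    contraction hDne (by norm_num) hbD hφb1 hlip1
  -- splitting steps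
  have stepD : QQ P ≤ QQ V1 + QQ V2 := by
    have perσ : ∀ σ : Fin m → Bool,
        sSup (ker σ '' P) ≤ sSup (ker σ '' V1) + sSup (ker σ '' V2) := by
      intro σ
      apply csSup_le (hPne.image _)
      rintro _ ⟨_, ⟨⟨f1, f2⟩, ⟨hf1, hf2⟩, rfl⟩, rfl⟩
      have e1 := le_csSup (bddAbove_ker hbV1 σ)
        (mem_image_of_mem (ker σ) (mem_image_of_mem emb hf1))
      have e2 := le_csSup (bddAbove_ker hbV2 σ)
        (mem_image_of_mem (ker σ) (mem_image_of_mem emb hf2))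
      have identity : ker σ (fun i => f1 (S i) + f2 (S i))
          = ker σ (emb f1) + ker σ (emb f2) := by
        unfold ker
        rw [← Finset.sum_add_distrib]
        apply Finset.sum_congr rfl; intro i _
        simp only [hemb]; ring
      rw [identity]
      linarith [e1, e2]
    calc QQ P ≤ ∑ σ : Fin m → Bool, (sSup (ker σ '' V1) + sSup (ker σ '' V2)) :=
        Finset.sum_le_sum fun σ _ => perσ σ
    _ = QQ V1 + QQ V2 := Finset.sum_add_distrib
  have stepE : QQ D ≤ QQ V1 + QQ V2 := by
    have perσ : ∀ σ : Fin m → Bool,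
        sSup (ker σ '' D) ≤ sSup (ker σ '' V1) + sSup (ker (fun k => !σ k) '' V2) := by
      intro σ
      apply csSup_le (hDne.image _)
      rintro _ ⟨_, ⟨⟨f1, f2⟩, ⟨hf1, hf2⟩, rfl⟩, rfl⟩
      have e1 := le_csSup (bddAbove_ker hbV1 σ)
        (mem_image_of_mem (ker σ) (mem_image_of_mem emb hf1))
      have e2 := le_csSup (bddAbove_ker hbV2 (fun k => !σ k))
        (mem_image_of_mem (ker (fun k => !σ k)) (mem_image_of_mem emb hf2))
      have identity : ker σ (fun i => f1 (S i) - f2 (S i))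
          = ker σ (emb f1) + ker (fun k => !σ k) (emb f2) := by
        rw [ker_not]
        unfold ker
        rw [← sub_eq_add_neg, ← Finset.sum_sub_distrib]
        apply Finset.sum_congr rfl; intro i _
        simp only [hemb]; ring
      rw [identity]
      linarith [e1, e2]
    calc QQ D ≤ ∑ σ : Fin m → Bool,
        (sSup (ker σ '' V1) + sSup (ker (fun k => !σ k) '' V2)) :=
        Finset.sum_le_sum fun σ _ => perσ σ
    _ = QQ V1 + QQ V2 := by
        rw [Finset.sum_add_distrib]
        congr 1
        exact sum_flipAll (fun σ => sSup (ker σ '' V2))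
  have hQ1 : 0 ≤ QQ V1 := QQ_nonneg (hF1.image _) hbV1
  have hQ2 : 0 ≤ QQ V2 := QQ_nonneg (hF2.image _) hbV2
  have total : QQ Vp ≤ 2 * (QQ V1 + QQ V2) := by linarith
  -- convert to empRad
  rw [empRad_eq S Fprod hFpne hbp hm, empRad_eq S F1 hF1 hb1 hm, empRad_eq S F2 hF2 hb2 hm]
  have hmR : (0:ℝ) < m := by exact_mod_cast hm
  have hrhs : 2 * (QQ V1 / m / 2 ^ m + QQ V2 / m / 2 ^ m)
      = (2 * (QQ V1 + QQ V2)) / m / 2 ^ m := by ring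
  rw [hrhs]
  gcongr
end

section
/- Let H be a family of functions mapping X to [0,1] and let ℓ: X → [0,1] be a fixed function (the loss of a fixed predictor). Then for any sample S of size m, the empirical Rademacher complexity of the product class {x ↦ h(x) * ℓ(x) : h ∈ H} is at most R̂_S(H) + R̂_S({ℓ}), where R̂_S({ℓ}) is the empirical Rademacher complexity of the singleton class {ℓ}. -/
open Set

/-!
Rescaling the sample vectors of a bounded class coordinatewise by factors in `[-1, 1]` does not
increase the Rademacher average (a contraction principle). It suffices to rescale one coordinate
`j` by `t`: pairing each sign vector with the one flipped at `j`, the two suprema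
`sup (u + t v) + sup (u - t v)` are dominated by `sup (u + v) + sup (u - v)`, because for any two
points `x, y` the sum `u x + u y + t (v x - v y)` is at most `u x + u y + |v x - v y|`, which is
one of the cross sums `(u ± v) x + (u ∓ v) y`. Multiplying by `ℓ` rescales the sample vectors
of `H` by `ℓ (S i) ∈ [0, 1]`, and a singleton class has Rademacher complexity `0` since the sign
vectors `σ` and `-σ` cancel.
-/

theorem sSup_image_add_mul_add_sSup_image_sub_mul_le {α : Type*} {s : Set α} {f g : α → ℝ}
    {c : ℝ} (hc : |c| ≤ 1) (hadd : BddAbove ((fun x => f x + g x) '' s))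
    (hsub : BddAbove ((fun x => f x - g x) '' s)) :
    sSup ((fun x => f x + c * g x) '' s) + sSup ((fun x => f x - c * g x) '' s) ≤
      sSup ((fun x => f x + g x) '' s) + sSup ((fun x => f x - g x) '' s) := by
  rcases s.eq_empty_or_nonempty with rfl | hs
  · simp
  have := hs.to_subtype
  rw [image_eq_range] at hadd hsub
  simp only [sSup_image']
  refine ciSup_add_ciSup_le fun x y => ?_
  have hgap : c * (g x - g y) ≤ |g x - g y| :=
    (le_abs_self _).trans (by rw [abs_mul]; exact mul_le_of_le_one_left (abs_nonneg _) hc)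
  rcases le_total (g y) (g x) with hg | hg
  · have := add_le_add (le_ciSup hadd x) (le_ciSup hsub y)
    rw [abs_of_nonneg (sub_nonneg.2 hg)] at hgap
    linarith
  · have := add_le_add (le_ciSup hadd y) (le_ciSup hsub x)
    rw [abs_of_nonpos (sub_nonpos.2 hg)] at hgap
    linarith

theorem sum_le_sum_of_involutive {β : Type*} [Fintype β] {φ : β → β} (hφ : Function.Involutive φ)
    {f g : β → ℝ} (h : ∀ x, f x + f (φ x) ≤ g x + g (φ x)) : ∑ x, f x ≤ ∑ x, g x := by
  have hsum := Finset.sum_le_sum fun x (_ : x ∈ Finset.univ) => h x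
  have hcomp (F : β → ℝ) : ∑ x, F (φ x) = ∑ x, F x :=
    Fintype.sum_bijective φ hφ.bijective _ _ fun _ => rfl
  rw [Finset.sum_add_distrib, Finset.sum_add_distrib, hcomp, hcomp] at hsum
  linarith

section Rademacher

variable {ι : Type*} [Fintype ι]

noncomputable def signedSum (σ : ι → Bool) (a : ι → ℝ) : ℝ :=
  ∑ i, (if σ i then (1 : ℝ) else -1) * a i

theorem signedSum_not (σ : ι → Bool) (a : ι → ℝ) :
    signedSum (fun i => !σ i) a = -signedSum σ a := by
  simp only [signedSum, ← Finset.sum_neg_distrib]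
  refine Finset.sum_congr rfl fun i _ => ?_
  by_cases h : σ i <;> simp [h]

theorem Bornology.IsBounded.bddAbove_signedSum_image {A : Set (ι → ℝ)}
    (hA : Bornology.IsBounded A) (σ : ι → Bool) : BddAbove (signedSum σ '' A) :=
  (hA.isCompact_closure.bddAbove_image
    (by unfold signedSum; fun_prop : Continuous (signedSum σ)).continuousOn).mono
    (image_mono subset_closure)

theorem Bornology.IsBounded.image_mul_left {A : Set (ι → ℝ)} (hA : Bornology.IsBounded A)
    (d : ι → ℝ) : Bornology.IsBounded ((d * ·) '' A) :=
  (hA.isCompact_closure.image (by fun_prop : Continuous (d * ·))).isBounded.subset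
    (image_mono subset_closure)

variable [DecidableEq ι]

theorem signedSum_mulSingle_mul (σ : ι → Bool) (j : ι) (t : ℝ) (a : ι → ℝ) :
    signedSum σ (Pi.mulSingle j t * a) =
      signedSum σ a + (t - 1) * ((if σ j then (1 : ℝ) else -1) * a j) := by
  have hoff : ∑ i ∈ {j}ᶜ, (if σ i then (1 : ℝ) else -1) * (Pi.mulSingle j t * a : ι → ℝ) i =
      ∑ i ∈ {j}ᶜ, (if σ i then (1 : ℝ) else -1) * a i :=
    Finset.sum_congr rfl fun i hi => by
      rw [Pi.mul_apply, Pi.mulSingle_eq_of_ne (by simpa using hi), one_mul]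
  rw [signedSum, signedSum, Fintype.sum_eq_add_sum_compl j, hoff, Fintype.sum_eq_add_sum_compl j,
    Pi.mul_apply, Pi.mulSingle_eq_same]
  ring

theorem signedSum_update_not (σ : ι → Bool) (j : ι) (a : ι → ℝ) :
    signedSum (Function.update σ j (!σ j)) a =
      signedSum σ a - 2 * ((if σ j then (1 : ℝ) else -1) * a j) := by
  have hoff : ∑ i ∈ {j}ᶜ, (if Function.update σ j (!σ j) i then (1 : ℝ) else -1) * a i =
      ∑ i ∈ {j}ᶜ, (if σ i then (1 : ℝ) else -1) * a i :=
    Finset.sum_congr rfl fun i hi => by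
      rw [Function.update_of_ne (by simpa using hi)]
  rw [signedSum, signedSum, Fintype.sum_eq_add_sum_compl j, hoff, Fintype.sum_eq_add_sum_compl j,
    Function.update_self]
  by_cases h : σ j <;> simp [h] <;> ring

noncomputable def rademacherSum (A : Set (ι → ℝ)) : ℝ :=
  ∑ σ : ι → Bool, sSup (signedSum σ '' A)

theorem rademacherSum_singleton (a : ι → ℝ) : rademacherSum {a} = 0 := by
  have hφ : Function.Involutive fun σ : ι → Bool => fun i => !σ i := fun σ => by simp
  have h : ∑ σ : ι → Bool, signedSum (fun i => !σ i) a = ∑ σ, signedSum σ a :=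
    Fintype.sum_bijective _ hφ.bijective _ _ fun _ => rfl
  simp only [signedSum_not, Finset.sum_neg_distrib] at h
  simp only [rademacherSum, image_singleton, csSup_singleton]
  linarith

theorem rademacherSum_image_mulSingle_mul_le {A : Set (ι → ℝ)} (hA : Bornology.IsBounded A)
    (j : ι) {t : ℝ} (ht : |t| ≤ 1) :
    rademacherSum ((Pi.mulSingle j t * ·) '' A) ≤ rademacherSum A := by
  refine sum_le_sum_of_involutive (φ := fun σ => Function.update σ j (!σ j))
    (fun σ => by simp) fun σ => ?_
  let g : (ι → ℝ) → ℝ := fun a => (if σ j then (1 : ℝ) else -1) * a j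
  let f : (ι → ℝ) → ℝ := fun a => signedSum σ a - g a
  have hsign : (if !σ j then (1 : ℝ) else -1) = -(if σ j then (1 : ℝ) else -1) := by
    by_cases h : σ j <;> simp [h]
  have e1 : signedSum σ ∘ (Pi.mulSingle j t * ·) = fun a => f a + t * g a := by
    funext a; simp only [Function.comp_apply, signedSum_mulSingle_mul, f, g]; ring
  have e2 : signedSum (Function.update σ j (!σ j)) ∘ (Pi.mulSingle j t * ·) =
      fun a => f a - t * g a := by
    funext a
    simp only [Function.comp_apply, signedSum_mulSingle_mul, signedSum_update_not,
      Function.update_self, hsign, f, g]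
    ring
  have e3 : signedSum σ = fun a => f a + g a := by funext a; simp only [f, g]; ring
  have e4 : signedSum (Function.update σ j (!σ j)) = fun a => f a - g a := by
    funext a; simp only [signedSum_update_not, f, g]; ring
  rw [← image_comp, ← image_comp, e1, e2, e3, e4]
  exact sSup_image_add_mul_add_sSup_image_sub_mul_le ht (e3 ▸ hA.bddAbove_signedSum_image σ)
    (e4 ▸ hA.bddAbove_signedSum_image _)

theorem rademacherSum_image_mul_le {A : Set (ι → ℝ)} (hA : Bornology.IsBounded A) {c : ι → ℝ}
    (hc : ∀ i, |c i| ≤ 1) : rademacherSum ((c * ·) '' A) ≤ rademacherSum A := by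
  rw [← Finset.univ_prod_mulSingle c]
  refine Finset.prod_induction _ (fun d => ∀ A : Set (ι → ℝ), Bornology.IsBounded A →
    rademacherSum ((d * ·) '' A) ≤ rademacherSum A) ?_ ?_ ?_ A hA
  · intro d e hd he A hA
    calc rademacherSum ((d * e * ·) '' A) = rademacherSum ((d * ·) '' ((e * ·) '' A)) := by
          simp only [image_image, mul_assoc]
      _ ≤ rademacherSum ((e * ·) '' A) := hd _ (hA.image_mul_left e)
      _ ≤ rademacherSum A := he A hA
  · intro A _
    simp
  · intro i _ A hA
    exact rademacherSum_image_mulSingle_mul_le hA i (hc i)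

end Rademacher

theorem empRad_eq_rademacherSum {X : Type*} {m : ℕ} (G : Set (X → ℝ)) (S : Fin m → X) :
    empRad G S = rademacherSum ((fun g i => g (S i) / m) '' G) / 2 ^ m := by
  simp only [empRad, rademacherSum, image_image, signedSum, Finset.sum_div, mul_div_assoc]

/-- Product with a fixed `[0,1]`-valued function `ℓ`: the empirical Rademacher
complexity of `{x ↦ h x * ℓ x : h ∈ H}` is at most `R̂_S(H) + R̂_S({ℓ})`. -/
theorem empRad_product_singleton_le {X : Type*} {m : ℕ} (S : Fin m → X)
    (H : Set (X → ℝ)) (ℓ : X → ℝ)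
    (hH : ∀ h ∈ H, ∀ x, h x ∈ Icc (0:ℝ) 1)
    (hℓ : ∀ x, ℓ x ∈ Icc (0:ℝ) 1) :
    empRad {g | ∃ h ∈ H, g = fun x => h x * ℓ x} S ≤
      empRad H S + empRad ({ℓ} : Set (X → ℝ)) S := by
  set sample : (X → ℝ) → Fin m → ℝ := fun g i => g (S i) / m
  have hbdd : Bornology.IsBounded (sample '' H) :=
    (Metric.isBounded_Icc (0 : Fin m → ℝ) fun _ => 1 / m).subset <| by
      rintro _ ⟨h, hh, rfl⟩
      exact ⟨fun i => div_nonneg (hH h hh _).1 m.cast_nonneg,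
        fun i => div_le_div_of_nonneg_right (hH h hh _).2 m.cast_nonneg⟩
  have hprod : sample '' {g | ∃ h ∈ H, g = fun x => h x * ℓ x} =
      ((fun i => ℓ (S i)) * ·) '' (sample '' H) := by
    rw [image_image]
    ext a
    simp [sample, Pi.mul_def, mul_div_assoc, mul_comm]
  rw [empRad_eq_rademacherSum, empRad_eq_rademacherSum, empRad_eq_rademacherSum, image_singleton,
    rademacherSum_singleton, zero_div, add_zero, hprod]
  gcongr
  exact rademacherSum_image_mul_le hbdd fun i => (abs_of_nonneg (hℓ _).1).trans_le (hℓ _).2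
end
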